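/- Let D be a finite homomorphism-homogeneous reflexive improper bidirectionally disconnected digraph, and let S, T be distinct θ(D)-classes with S ⇄ T. Define γ_T(S) ⊆ S² by (x,y) ∈ γ_T(S) iff there is no t ∈ T with (x → t → y or y → t → x). Then γ_T(S) is an equivalence relation on S. -/

import Mathlib

/-- A homomorphism from a finite induced subdigraph `U` is encoded as a total map that is
constrained only on `U`. -/
def IsHomHom {V : Type*} (E : V → V → Prop) : Prop :=
  ∀ (U : Set V) (f : V → V), U.Finite →
    (∀ x ∈ U, ∀ y ∈ U, E x y → E (f x) (f y)) →
    ∃ g : V → V, (∀ x y, E x y → E (g x) (g y)) ∧ ∀ x ∈ U, g x = f x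

/-- The relation `θ(D)`. -/
def Theta {V : Type*} (E : V → V → Prop) : V → V → Prop :=
  Relation.EqvGen (fun a b => E a b ∧ E b a)

def Improper {V : Type*} (E : V → V → Prop) : Prop :=
  (∃ x y, x ≠ y ∧ E x y ∧ E y x) ∧ (∃ x y, E x y ∧ ¬ E y x)

def BidirDisconnected {V : Type*} (E : V → V → Prop) : Prop :=
  ∃ x y, ¬ Theta E x y ∧ E x y


/-! Everything rests on a comparability fact: if `x` and `z` lie in the `θ`-class of `y`,
`t` lies in another class and `x → t → z`, then `y → t` or `t → y`. Given it, `x → t → z`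
with `t ∈ T` would yield `x → t → y` or `y → t → z`, which is transitivity of `γ_T(S)`.

Comparability is proved for a smallest counterexample. A non-injective endomorphism fixing
`y` and `t` has an idempotent power, a retraction onto a smaller homomorphism-homogeneous
digraph that still contains a counterexample. Otherwise no vertex outside `{y, t}` can be
collapsed onto another vertex whose adjacencies to `y` and `t` include its own. Combined with an
endomorphism `g` swapping the non-adjacent `y` and `t`, this leaves only the six vertices
`y, t, x, z, g x, g z`, and an endomorphism fixing `y` and sending `t` to `g x` then creates a
double edge between the two classes. -/
open Function

section Endomorphisms

variable {V : Type*} {E : V → V → Prop}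

def IsEndo (E : V → V → Prop) (f : V → V) : Prop :=
  ∀ a b, E a b → E (f a) (f b)

lemma IsEndo.comp {f g : V → V} (hf : IsEndo E f) (hg : IsEndo E g) : IsEndo E (f ∘ g) :=
  fun a b h => hf _ _ (hg a b h)

lemma IsEndo.iterate {f : V → V} (hf : IsEndo E f) (n : ℕ) : IsEndo E f^[n] := by
  induction n with
  | zero => exact fun _ _ h => h
  | succ n ih => rw [iterate_succ']; exact hf.comp ih

lemma Theta.map {W : Type*} {E' : W → W → Prop} {f : V → W}
    (hf : ∀ a b, E a b → E' (f a) (f b)) {a b : V} (h : Theta E a b) :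
    Theta E' (f a) (f b) := by
  induction h with
  | rel p q hpq => exact .rel _ _ ⟨hf _ _ hpq.1, hf _ _ hpq.2⟩
  | refl p => exact .refl _
  | symm p q _ ih => exact .symm _ _ ih
  | trans p q r _ _ ih₁ ih₂ => exact .trans _ _ _ ih₁ ih₂

lemma IsHomHom.exists_endo_swap (hrefl : ∀ a, E a a) (hhh : IsHomHom E) {y t : V}
    (hyt : ¬ E y t) (hty : ¬ E t y) : ∃ g, IsEndo E g ∧ g y = t ∧ g t = y := by
  classical
  obtain ⟨g, hg, hgU⟩ := hhh {y, t} (Equiv.swap y t) (by simp) (by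
    rintro a (rfl | rfl) b (rfl | rfl) hab <;> simp_all)
  exact ⟨g, hg, by simp [hgU y (by simp)], by simp [hgU t (by simp)]⟩

lemma IsHomHom.exists_endo_update (hrefl : ∀ a, E a a) (hhh : IsHomHom E) {U : Set V}
    (hU : U.Finite) {v w : V} (hvU : v ∉ U) (hout : ∀ a ∈ U, E v a → E w a)
    (hin : ∀ a ∈ U, E a v → E a w) :
    ∃ g, IsEndo E g ∧ g v = w ∧ ∀ a ∈ U, g a = a := by
  classical
  have hne : ∀ a ∈ U, a ≠ v := fun a ha hav => hvU (hav ▸ ha)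
  obtain ⟨g, hg, hgU⟩ := hhh (insert v U) (update id v w) (hU.insert v) (by
    rintro a (rfl | ha) b (rfl | hb) hab
    · simpa using hrefl w
    · simpa [hne b hb] using hout b hb hab
    · simpa [hne a ha] using hin a ha hab
    · simpa [hne a ha, hne b hb] using hab)
  exact ⟨g, hg, by simp [hgU v (by simp)],
    fun a ha => by simp [hgU a (.inr ha), hne a ha]⟩

end Endomorphisms

theorem exists_isIdempotentElem_pow {M : Type*} [Monoid M] [Finite M] (a : M) :
    ∃ n ≠ 0, IsIdempotentElem (a ^ n) := by
  obtain ⟨i, j, hij, heq⟩ := Set.finite_univ.exists_lt_map_eq_of_forall_mem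
    (f := fun n : ℕ => a ^ n) fun _ => Set.mem_univ _
  have hstep : ∀ m, i ≤ m → a ^ (m + (j - i)) = a ^ m := by
    intro m hm
    obtain ⟨d, rfl⟩ := Nat.exists_eq_add_of_le hm
    calc a ^ (i + d + (j - i)) = a ^ d * a ^ j := by rw [← pow_add]; congr 1; omega
      _ = a ^ (i + d) := by rw [← heq, ← pow_add, add_comm]
  have hper : ∀ k m, i ≤ m → a ^ (m + k * (j - i)) = a ^ m := by
    intro k
    induction k with
    | zero => simp
    | succ k ih =>
      intro m hm
      rw [add_mul, one_mul, ← add_assoc, hstep _ (by omega), ih m hm]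
  refine ⟨(i + 1) * (j - i), Nat.mul_ne_zero (by omega) (by omega), ?_⟩
  rw [IsIdempotentElem, ← pow_add, hper]
  exact (Nat.le_succ i).trans (Nat.le_mul_of_pos_right _ (by omega))

section Core

variable {V : Type*} {E : V → V → Prop}

def IsRelCore (E : V → V → Prop) (y t : V) : Prop :=
  ∀ g, IsEndo E g → g y = y → g t = t → Injective g

def NbhdLE (E : V → V → Prop) (y t v w : V) : Prop :=
  (E v y → E w y) ∧ (E y v → E y w) ∧ (E v t → E w t) ∧ (E t v → E t w)

lemma IsRelCore.eq_of_nbhdLE {y t v w : V} (hcore : IsRelCore E y t) (hrefl : ∀ a, E a a)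
    (hhh : IsHomHom E) (hvy : v ≠ y) (hvt : v ≠ t) (hle : NbhdLE E y t v w) : v = w := by
  by_contra hvw
  obtain ⟨g, hg, hgv, hgU⟩ := hhh.exists_endo_update hrefl (U := {y, t, w}) (v := v) (w := w)
    (by simp) (by simp [hvy, hvt, hvw])
    (by rintro a (rfl | rfl | rfl) e
        exacts [hle.1 e, hle.2.2.1 e, hrefl _])
    (by rintro a (rfl | rfl | rfl) e
        exacts [hle.2.1 e, hle.2.2.2 e, hrefl _])
  have hgw : g w = w := hgU w (by simp)
  exact hvw (hcore g hg (hgU y (by simp)) (hgU t (by simp)) (hgv.trans hgw.symm))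

end Core

structure Obstruction {V : Type*} (E : V → V → Prop) (y t x z : V) : Prop where
  not_theta : ¬ Theta E y t
  not_edge_yt : ¬ E y t
  not_edge_ty : ¬ E t y
  theta_left : Theta E x y
  theta_right : Theta E z y
  edge_left : E x t
  edge_right : E t z

namespace Obstruction

variable {V : Type*} {E : V → V → Prop} {y t x z : V}

lemma ne (h : Obstruction E y t x z) {a b : V} (ha : Theta E a y) (hb : Theta E b t) :
    a ≠ b := by
  rintro rfl
  exact h.not_theta (.trans _ _ _ (.symm _ _ ha) hb)

lemma not_double_edge (h : Obstruction E y t x z) {a b : V} (ha : Theta E a y)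
    (hb : Theta E b t) (hab : E a b) (hba : E b a) : False :=
  h.not_theta (.trans _ _ _ (.symm _ _ ha) (.trans _ _ _ (.rel _ _ ⟨hab, hba⟩) hb))

section RelCore

variable {g : V → V}

lemma double_edges (hrefl : ∀ a, E a a) (hhh : IsHomHom E) (hcore : IsRelCore E y t)
    (h : Obstruction E y t x z) (hg : IsEndo E g) (hgy : g y = t) (hgt : g t = y) :
    E x y ∧ E y x ∧ E z y ∧ E y z := by
  have collapse := fun {v w : V} => hcore.eq_of_nbhdLE hrefl hhh (v := v) (w := w)
  have hu : Theta E (g x) t := hgy ▸ h.theta_left.map hg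
  have hw : Theta E (g z) t := hgy ▸ h.theta_right.map hg
  have hxy : x ≠ y := fun e => h.not_edge_yt (e ▸ h.edge_left)
  have hzy : z ≠ y := fun e => h.not_edge_ty (e ▸ h.edge_right)
  have hxt : x ≠ t := h.ne h.theta_left (.refl t)
  have hzt : z ≠ t := h.ne h.theta_right (.refl t)
  have ntx : ¬ E t x := h.not_double_edge h.theta_left (.refl t) h.edge_left
  have nzt : ¬ E z t := fun e => h.not_double_edge h.theta_right (.refl t) e h.edge_right
  have uy : E (g x) y := hgt ▸ hg _ _ h.edge_left
  have yw : E y (g z) := hgt ▸ hg _ _ h.edge_right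
  -- Each missing edge would let `x` or `z` collapse onto `t`, `g x` or `g z`.
  have yx : E y x := by
    by_contra nyx
    by_cases xy : E x y
    · exact h.ne h.theta_left hu <| collapse hxy hxt
        ⟨fun _ => uy, fun e => absurd e nyx, fun _ => hgy ▸ hg _ _ xy, fun e => absurd e ntx⟩
    · exact hxt <| collapse hxy hxt
        ⟨fun e => absurd e xy, fun e => absurd e nyx, fun _ => hrefl t, fun _ => hrefl t⟩
  have zy : E z y := by
    by_contra nzy
    by_cases yz : E y z
    · exact h.ne h.theta_right hw <| collapse hzy hzt
        ⟨fun e => absurd e nzy, fun _ => yw, fun e => absurd e nzt, fun _ => hgy ▸ hg _ _ yz⟩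
    · exact hzt <| collapse hzy hzt
        ⟨fun e => absurd e nzy, fun e => absurd e yz, fun _ => hrefl t, fun _ => hrefl t⟩
  have xy : E x y := by
    by_contra nxy
    exact h.ne h.theta_left hw <| collapse hxy hxt
      ⟨fun e => absurd e nxy, fun _ => yw, fun _ => hgy ▸ hg _ _ zy, fun e => absurd e ntx⟩
  have yz : E y z := by
    by_contra nyz
    exact h.ne h.theta_right hu <| collapse hzy hzt
      ⟨fun _ => uy, fun e => absurd e nyz, fun e => absurd e nzt, fun _ => hgy ▸ hg _ _ yx⟩
  exact ⟨xy, yx, zy, yz⟩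

lemma eq_six (hrefl : ∀ a, E a a) (hhh : IsHomHom E) (hcore : IsRelCore E y t)
    (h : Obstruction E y t x z) (hg : IsEndo E g) (hgy : g y = t) (hgt : g t = y) :
    ∀ v, v = y ∨ v = t ∨ v = x ∨ v = z ∨ v = g x ∨ v = g z := by
  obtain ⟨xy, yx, zy, yz⟩ := h.double_edges hrefl hhh hcore hg hgy hgt
  intro v
  by_contra! hv
  obtain ⟨hvy, hvt, hvx, hvz, hvu, hvw⟩ := hv
  -- `v` collapses onto whichever of `x, z, g x, g z` misses the same edge to `y` or `t`.
  have collapse := fun {w : V} => hcore.eq_of_nbhdLE hrefl hhh hvy hvt (w := w)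
  by_cases vy : E v y
  · by_cases yv : E y v
    · by_cases vt : E v t
      · by_cases tv : E t v
        · exact h.not_theta (.trans _ _ _ (.rel _ _ ⟨yv, vy⟩) (.rel _ _ ⟨vt, tv⟩))
        · exact hvx <| collapse
            ⟨fun _ => xy, fun _ => yx, fun _ => h.edge_left, fun e => absurd e tv⟩
      · exact hvz <| collapse
          ⟨fun _ => zy, fun _ => yz, fun e => absurd e vt, fun _ => h.edge_right⟩
    · exact hvu <| collapse ⟨fun _ => hgt ▸ hg _ _ h.edge_left, fun e => absurd e yv,
        fun _ => hgy ▸ hg _ _ xy, fun _ => hgy ▸ hg _ _ yx⟩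
  · exact hvw <| collapse ⟨fun e => absurd e vy, fun _ => hgt ▸ hg _ _ h.edge_right,
      fun _ => hgy ▸ hg _ _ zy, fun _ => hgy ▸ hg _ _ yz⟩

lemma eq_of_theta (hrefl : ∀ a, E a a) (hhh : IsHomHom E) (hcore : IsRelCore E y t)
    (h : Obstruction E y t x z) (hg : IsEndo E g) (hgy : g y = t) (hgt : g t = y) :
    ∀ v, Theta E v y → v = y ∨ v = x ∨ v = z := by
  have hu : Theta E (g x) t := hgy ▸ h.theta_left.map hg
  have hw : Theta E (g z) t := hgy ▸ h.theta_right.map hg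
  intro v hv
  rcases h.eq_six hrefl hhh hcore hg hgy hgt v with e | e | e | e | e | e
  · exact .inl e
  · exact absurd e (h.ne hv (.refl t))
  · exact .inr (.inl e)
  · exact .inr (.inr e)
  · exact absurd e (h.ne hv hu)
  · exact absurd e (h.ne hv hw)

end RelCore

theorem not_isRelCore (hrefl : ∀ a, E a a) (hhh : IsHomHom E) (h : Obstruction E y t x z) :
    ¬ IsRelCore E y t := by
  intro hcore
  obtain ⟨g, hg, hgy, hgt⟩ := hhh.exists_endo_swap hrefl h.not_edge_yt h.not_edge_ty
  have mem := h.eq_of_theta hrefl hhh hcore hg hgy hgt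
  have hu : Theta E (g x) t := hgy ▸ h.theta_left.map hg
  have uy : E (g x) y := hgt ▸ hg _ _ h.edge_left
  have hgu : g (g x) = x := by
    have gut : E (g (g x)) t := hgy ▸ hg _ _ uy
    rcases mem _ (hgt ▸ hu.map hg) with c | c | c
    · exact absurd (c ▸ gut) h.not_edge_yt
    · exact c
    · exact absurd (c ▸ gut) fun e => h.not_double_edge h.theta_right (.refl t) e h.edge_right
  have nxu : ¬ E x (g x) := fun e =>
    h.not_double_edge h.theta_left hu e (by simpa only [hgu] using hg _ _ e)
  have htu : t ≠ g x := fun e => h.not_edge_ty (e ▸ uy)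
  obtain ⟨e, he, het, heU⟩ := hhh.exists_endo_update hrefl (U := {y, g x}) (v := t) (w := g x)
    (by simp) (by simp [(h.ne (.refl y) (.refl t)).symm, htu])
    (by rintro a (rfl | rfl) hta; exacts [absurd hta h.not_edge_ty, hrefl _])
    (by rintro a (rfl | rfl) hat; exacts [absurd hat h.not_edge_yt, hrefl _])
  have hey : e y = y := heU y (by simp)
  have heu : e (g x) = g x := heU (g x) (by simp)
  by_cases zu : E z (g x)
  · exact h.not_double_edge (hey ▸ h.theta_right.map he) hu (heu ▸ he _ _ zu)
      (het ▸ he _ _ h.edge_right)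
  · have hex : E (e x) (g x) := het ▸ he _ _ h.edge_left
    rcases mem _ (hey ▸ h.theta_left.map he) with c | c | c <;> rw [c] at hex
    exacts [h.not_double_edge (.refl y) hu hex uy, nxu hex, zu hex]

end Obstruction

section Retract

variable {V : Type*} {E : V → V → Prop} {r : V → V}

lemma IsHomHom.restrict_fixed (hhh : IsHomHom E) (hr : IsEndo E r)
    (hidem : ∀ v, r (r v) = r v) : IsHomHom (fun a b : {v // r v = v} => E a b) := by
  have hproj : ∀ a : {v // r v = v}, (⟨r a, hidem a⟩ : {v // r v = v}) = a :=
    fun a => Subtype.ext a.2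
  intro U f hU hf
  obtain ⟨G, hG, hGU⟩ := hhh (Subtype.val '' U) (fun v => f ⟨r v, hidem v⟩) (hU.image _) (by
    rintro _ ⟨a, ha, rfl⟩ _ ⟨b, hb, rfl⟩ hab
    simpa only [hproj] using hf a ha b hb hab)
  refine ⟨fun a => ⟨r (G a), hidem _⟩, fun a b hab => hr _ _ (hG _ _ hab), fun a ha => ?_⟩
  apply Subtype.ext
  simp only [hGU a ⟨a, ha, rfl⟩, hproj]
  exact (f a).2

lemma Obstruction.restrict_fixed {y t x z : V} (h : Obstruction E y t x z) (hr : IsEndo E r)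
    (hidem : ∀ v, r (r v) = r v) (hy : r y = y) (ht : r t = t) :
    Obstruction (fun a b : {v // r v = v} => E a b) ⟨y, hy⟩ ⟨t, ht⟩
      ⟨r x, hidem x⟩ ⟨r z, hidem z⟩ := by
  have hy' : (⟨r y, hidem y⟩ : {v // r v = v}) = ⟨y, hy⟩ := Subtype.ext hy
  have hproj := fun {a b : V} (hab : Theta E a b) =>
    hab.map (E' := fun a b : {v // r v = v} => E a b) (f := fun v => ⟨r v, hidem v⟩) hr
  refine ⟨fun hθ => h.not_theta (hθ.map (f := Subtype.val) fun _ _ => id), h.not_edge_yt,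
    h.not_edge_ty, hy' ▸ hproj h.theta_left, hy' ▸ hproj h.theta_right, ?_, ?_⟩
  · simpa only [ht] using hr _ _ h.edge_left
  · simpa only [ht] using hr _ _ h.edge_right

end Retract

theorem Obstruction.false {V : Type*} [Finite V] {E : V → V → Prop} {y t x z : V}
    (hrefl : ∀ a, E a a) (hhh : IsHomHom E) (h : Obstruction E y t x z) : False := by
  induction hn : Nat.card V using Nat.strong_induction_on generalizing V with
  | _ n ih =>
  obtain ⟨g, hg, hgy, hgt, hinj⟩ :
      ∃ g, IsEndo E g ∧ g y = y ∧ g t = t ∧ ¬ Injective g := by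
    simpa [IsRelCore] using h.not_isRelCore hrefl hhh
  have : Finite (Function.End V) := inferInstanceAs (Finite (V → V))
  obtain ⟨k, hk, hidem⟩ := exists_isIdempotentElem_pow (M := Function.End V) g
  obtain ⟨v, hv⟩ : ∃ v, g^[k] v ≠ v := by
    by_contra! hfix
    obtain ⟨k, rfl⟩ := Nat.exists_eq_succ_of_ne_zero hk
    refine hinj (Injective.of_comp (f := g^[k]) ?_)
    rw [← iterate_succ, funext hfix]
    exact injective_id
  exact ih _ (hn ▸ Finite.card_subtype_lt (p := fun w => g^[k] w = w) hv)
    (E := fun a b : {w // g^[k] w = w} => E a b) (fun _ => hrefl _)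
    (hhh.restrict_fixed (hg.iterate k) (congrFun hidem))
    ((h.restrict_fixed (hg.iterate k) (congrFun hidem) (iterate_fixed hgy k)
      (iterate_fixed hgt k))) rfl

theorem IsHomHom.edge_or_edge_of_theta {V : Type*} [Finite V] {E : V → V → Prop}
    (hrefl : ∀ a, E a a) (hhh : IsHomHom E) {y t x z : V} (hθ : ¬ Theta E y t)
    (hx : Theta E x y) (hz : Theta E z y) (hxt : E x t) (htz : E t z) : E y t ∨ E t y := by
  by_contra! hc
  exact Obstruction.false hrefl hhh ⟨hθ, hc.1, hc.2, hx, hz, hxt, htz⟩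

theorem stmt_16_general {V : Type*} [Fintype V] (E : V → V → Prop)
    (hrefl : ∀ x, E x x)
    (hhh : IsHomHom E)
    (x₀ y₀ : V) (hxy : ¬ Theta E x₀ y₀) :
    (∀ x, Theta E x x₀ →
      ¬ ∃ t, Theta E t y₀ ∧ ((E x t ∧ E t x) ∨ (E x t ∧ E t x))) ∧
    (∀ x y, Theta E x x₀ → Theta E y x₀ →
      (¬ ∃ t, Theta E t y₀ ∧ ((E x t ∧ E t y) ∨ (E y t ∧ E t x))) →
      (¬ ∃ t, Theta E t y₀ ∧ ((E y t ∧ E t x) ∨ (E x t ∧ E t y)))) ∧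
    (∀ x y z, Theta E x x₀ → Theta E y x₀ → Theta E z x₀ →
      (¬ ∃ t, Theta E t y₀ ∧ ((E x t ∧ E t y) ∨ (E y t ∧ E t x))) →
      (¬ ∃ t, Theta E t y₀ ∧ ((E y t ∧ E t z) ∨ (E z t ∧ E t y))) →
      (¬ ∃ t, Theta E t y₀ ∧ ((E x t ∧ E t z) ∨ (E z t ∧ E t x)))) := by
  have hsep : ∀ {a t}, Theta E a x₀ → Theta E t y₀ → ¬ Theta E a t := fun ha ht hat =>
    hxy (.trans _ _ _ (.symm _ _ ha) (.trans _ _ _ hat ht))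
  have hcomp : ∀ {a b c t},
      Theta E a x₀ → Theta E b x₀ → Theta E c x₀ → Theta E t y₀ → E a t → E t c →
      E b t ∨ E t b := fun ha hb hc ht hat htc =>
    hhh.edge_or_edge_of_theta hrefl (hsep hb ht) (.trans _ _ _ ha (.symm _ _ hb))
      (.trans _ _ _ hc (.symm _ _ hb)) hat htc
  refine ⟨?_, ?_, ?_⟩
  · rintro x hx ⟨t, ht, h | h⟩ <;> exact hsep hx ht (.rel _ _ h)
  · rintro x y - - hγ ⟨t, ht, h⟩
    exact hγ ⟨t, ht, h.symm⟩
  · rintro x y z hx hy hz hγxy hγyz ⟨t, ht, ⟨hxt, htz⟩ | ⟨hzt, htx⟩⟩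
    · rcases hcomp hx hy hz ht hxt htz with hyt | hty
      exacts [hγyz ⟨t, ht, .inl ⟨hyt, htz⟩⟩, hγxy ⟨t, ht, .inl ⟨hxt, hty⟩⟩]
    · rcases hcomp hz hy hx ht hzt htx with hyt | hty
      exacts [hγxy ⟨t, ht, .inr ⟨hyt, htx⟩⟩, hγyz ⟨t, ht, .inr ⟨hzt, hty⟩⟩]

/-- Let `D` be a finite homomorphism-homogeneous reflexive improper
bidirectionally disconnected digraph, and let `S = [x₀]`, `T = [y₀]` be distinct
`θ(D)`-classes with edges in both directions. Then the relation `γ_T(S)`, defined by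
`(x, y) ∈ γ_T(S)` iff there is no `t ∈ T` with `x → t → y` or `y → t → x`, is an
equivalence relation on `S`. -/
theorem stmt_16 {V : Type*} [Fintype V] (E : V → V → Prop)
    (hrefl : ∀ x, E x x) (himp : Improper E) (hbd : BidirDisconnected E)
    (hhh : IsHomHom E)
    (x₀ y₀ : V) (hxy : ¬ Theta E x₀ y₀)
    (hST : ∃ s t, Theta E s x₀ ∧ Theta E t y₀ ∧ E s t)
    (hTS : ∃ s t, Theta E s x₀ ∧ Theta E t y₀ ∧ E t s) :
    (∀ x, Theta E x x₀ →
      ¬ ∃ t, Theta E t y₀ ∧ ((E x t ∧ E t x) ∨ (E x t ∧ E t x))) ∧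
    (∀ x y, Theta E x x₀ → Theta E y x₀ →
      (¬ ∃ t, Theta E t y₀ ∧ ((E x t ∧ E t y) ∨ (E y t ∧ E t x))) →
      (¬ ∃ t, Theta E t y₀ ∧ ((E y t ∧ E t x) ∨ (E x t ∧ E t y)))) ∧
    (∀ x y z, Theta E x x₀ → Theta E y x₀ → Theta E z x₀ →
      (¬ ∃ t, Theta E t y₀ ∧ ((E x t ∧ E t y) ∨ (E y t ∧ E t x))) →
      (¬ ∃ t, Theta E t y₀ ∧ ((E y t ∧ E t z) ∨ (E z t ∧ E t y))) →
      (¬ ∃ t, Theta E t y₀ ∧ ((E x t ∧ E t z) ∨ (E z t ∧ E t x)))) :=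
  stmt_16_general E hrefl hhh x₀ y₀ hxy
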